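/- arXiv:2106.08196 — 4 statements merged into one kernel-verified Lean document; each statement's English description precedes it below -/
import Mathlib

section
/- Every bounded nonatomic sequence x = (x_n) in ℓ¹ converges to zero uniformly on ℕ; that is, ‖x_n‖_∞ = sup_j |x_n(j)| → 0 as n → ∞. -/
/-! Fix `ε > 0` and a finite partition of `ℕ` into pieces `A` with `dsub x A ≤ ε / 4`. Since the
tails `∑' j : A, |x n j|` are bounded by `sup ‖x n‖`, their limsup controls them eventually, so for
large `n` every piece carries `ℓ¹`-mass below `ε / 2`. Each coordinate lies in some piece, so
`|x n j| ≤ ε / 2` for all `j`. -/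

open Filter Set

noncomputable def dsub (x : ℕ → lp (fun _ : ℕ => ℝ) 1) (A : Set ℕ) : ℝ :=
  Filter.limsup (fun n => ∑' j : A, |x n j|) Filter.atTop

def IsBddSeq (x : ℕ → lp (fun _ : ℕ => ℝ) 1) : Prop := ∃ C : ℝ, ∀ n, ‖x n‖ ≤ C

/-- `x` is nonatomic: for every `ε > 0` there is a finite partition of `ℕ`
all of whose pieces have `dsub x`-value at most `ε`. -/
def Nonatomic (x : ℕ → lp (fun _ : ℕ => ℝ) 1) : Prop :=
  ∀ ε : ℝ, 0 < ε → ∃ (m : ℕ) (A : Fin m → Set ℕ),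
    (⋃ i, A i) = Set.univ ∧ Pairwise (Function.onFun Disjoint A) ∧
    ∀ i, dsub x (A i) ≤ ε

namespace lp

variable {ι : Type*} (f : lp (fun _ : ι => ℝ) 1)

theorem summable_abs : Summable fun j => |f j| := by
  simpa using (lp.memℓp f).summable (by norm_num)

theorem tsum_abs_eq_norm : ∑' j, |f j| = ‖f‖ := by
  simp [lp.norm_eq_tsum_rpow (by norm_num : 0 < (1 : ENNReal).toReal) f, Real.norm_eq_abs]

theorem tsum_subtype_abs_le_norm (A : Set ι) : ∑' j : A, |f j| ≤ ‖f‖ :=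
  tsum_abs_eq_norm f ▸
    (summable_abs f).tsum_subtype_le _ A fun _ => abs_nonneg _

theorem abs_le_tsum_subtype_abs {A : Set ι} {j : ι} (hj : j ∈ A) :
    |f j| ≤ ∑' k : A, |f k| :=
  ((summable_abs f).subtype A).le_tsum ⟨j, hj⟩ fun _ _ => abs_nonneg _

theorem iSup_abs_le_of_iUnion_eq_univ [Nonempty ι] {κ : Type*} {A : κ → Set ι}
    (hA : ⋃ i, A i = univ) {δ : ℝ} (hδ : ∀ i, ∑' j : A i, |f j| ≤ δ) : ⨆ j, |f j| ≤ δ := by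
  refine ciSup_le fun j => ?_
  obtain ⟨i, hj⟩ := mem_iUnion.1 (hA ▸ mem_univ j)
  exact (abs_le_tsum_subtype_abs f hj).trans (hδ i)

end lp

theorem IsBddSeq.eventually_tsum_lt_of_dsub_lt {x : ℕ → lp (fun _ : ℕ => ℝ) 1} (hx : IsBddSeq x)
    {A : Set ℕ} {δ : ℝ} (hA : dsub x A < δ) : ∀ᶠ n in atTop, ∑' j : A, |x n j| < δ := by
  obtain ⟨C, hC⟩ := hx
  exact eventually_lt_of_limsup_lt hA
    (isBoundedUnder_of ⟨C, fun n => (lp.tsum_subtype_abs_le_norm (x n) A).trans (hC n)⟩)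

theorem stmt_11 (x : ℕ → lp (fun _ : ℕ => ℝ) 1) (hx : IsBddSeq x)
    (hnx : Nonatomic x) :
    Filter.Tendsto (fun n => ⨆ j : ℕ, |x n j|) Filter.atTop (nhds 0) := by
  refine tendsto_order.2 ⟨fun a ha => Eventually.of_forall fun n =>
    ha.trans_le (Real.iSup_nonneg fun _ => abs_nonneg _), fun ε hε => ?_⟩
  obtain ⟨m, A, hA, -, hdsub⟩ := hnx (ε / 4) (by positivity)
  have hsmall : ∀ᶠ n in atTop, ∀ i, ∑' j : A i, |x n j| < ε / 2 :=
    eventually_all.2 fun i => hx.eventually_tsum_lt_of_dsub_lt ((hdsub i).trans_lt (by linarith))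
  filter_upwards [hsmall] with n hn
  exact (lp.iSup_abs_le_of_iUnion_eq_univ (x n) hA fun i => (hn i).le).trans_lt (by linarith)
end

section
/- Let T : ℓ¹ → ℓ¹ be a continuous linear operator, let z_n = T(e_n) where (e_n) is the standard unit vector basis of ℓ¹, and let x = (x_n) be a bounded sequence in ℓ¹ that converges to zero pointwise on ℕ (i.e., x_n(j) → 0 as n → ∞ for each j). Let y_n = T(x_n), and let A ⊆ ℕ. If ‖1_A · z_n‖_∞ → 0 as n → ∞, then ‖1_A · y_n‖_∞ → 0 as n → ∞. -/
open Filter Set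

/-- The sup-norm of `u` restricted to the set `A`: `‖1_A · u‖_∞`. -/
noncomputable def supNormOn (A : Set ℕ) (u : lp (fun _ : ℕ => ℝ) 1) : ℝ :=
  ⨆ k : ℕ, A.indicator (fun k => |u k|) k

/-
The coordinates of `T u` expand as `(T u) k = ∑ⱼ u j · zⱼ k` with `zⱼ = T eⱼ`. Given `δ > 0`,
choose `N` with `‖1_A · zⱼ‖_∞ ≤ δ` for `j ≥ N`. For `k ∈ A` the terms `j < N` contribute at most
`∑_{j<N} |u j| ‖zⱼ‖`, which tends to `0` along `xₙ` by pointwise convergence, and the terms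
`j ≥ N` at most `δ ‖u‖₁ ≤ δ C`.
-/

open scoped ENNReal

theorem ContinuousLinearMap.hasSum_smul_map_lpSingle {α 𝕜 F : Type*} [DecidableEq α]
    [NontriviallyNormedField 𝕜] [NormedAddCommGroup F] [NormedSpace 𝕜 F] {p : ℝ≥0∞} [Fact (1 ≤ p)] (hp : p ≠ ∞)
    (T : lp (fun _ : α => 𝕜) p →L[𝕜] F) (u : lp (fun _ : α => 𝕜) p) :
    HasSum (fun j => u j • T (lp.single p j 1)) (T u) := by
  convert (lp.hasSum_single hp u).mapL T using 2 with j
  rw [← map_smul, ← lp.single_smul, smul_eq_mul, mul_one]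

section supNormOn

variable {A : Set ℕ} {u : lp (fun _ : ℕ => ℝ) 1}

theorem supNormOn_nonneg : 0 ≤ supNormOn A u :=
  Real.iSup_nonneg fun _ => Set.indicator_nonneg (fun _ _ => abs_nonneg _) _

theorem abs_apply_le_supNormOn {k : ℕ} (hk : k ∈ A) : |u k| ≤ supNormOn A u := by
  have hbdd : BddAbove (range fun k => A.indicator (fun k => |u k|) k) := by
    refine ⟨‖u‖, forall_mem_range.2 fun k => ?_⟩
    by_cases hk : k ∈ A
    · simpa [indicator_of_mem hk] using lp.norm_apply_le_norm one_ne_zero u k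
    · simp [indicator_of_notMem hk]
  simpa [supNormOn, indicator_of_mem hk] using le_ciSup hbdd k

theorem supNormOn_le {b : ℝ} (hb : 0 ≤ b) (h : ∀ k ∈ A, |u k| ≤ b) : supNormOn A u ≤ b := by
  refine ciSup_le fun k => ?_
  by_cases hk : k ∈ A
  · simpa [indicator_of_mem hk] using h k hk
  · simpa [indicator_of_notMem hk] using hb

end supNormOn

theorem supNormOn_map_le (T : lp (fun _ : ℕ => ℝ) 1 →L[ℝ] lp (fun _ : ℕ => ℝ) 1)
    (A : Set ℕ) (u : lp (fun _ : ℕ => ℝ) 1) (N : ℕ) {b : ℝ} (hb : 0 ≤ b)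
    (hN : ∀ j, N ≤ j → supNormOn A (T (lp.single 1 j 1)) ≤ b) :
    supNormOn A (T u) ≤
      ∑ j ∈ Finset.range N, |u j| * ‖T (lp.single 1 j 1)‖ + b * ‖u‖ := by
  set z : ℕ → lp (fun _ : ℕ => ℝ) 1 := fun j => T (lp.single 1 j 1)
  refine supNormOn_le (by positivity) fun k hk => ?_
  have hcoord : HasSum (fun j => u j * z j k) (T u k) :=
    (T.hasSum_smul_map_lpSingle ENNReal.one_ne_top u).mapL (lp.evalCLM ℝ _ 1 k)
  have hhead : HasSum (fun j => if j < N then |u j| * ‖z j‖ else 0)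
      (∑ j ∈ Finset.range N, |u j| * ‖z j‖) := by
    rw [← Finset.sum_congr rfl fun j hj => if_pos (Finset.mem_range.1 hj)]
    exact hasSum_sum_of_ne_finset_zero fun j hj => if_neg (by simpa using hj)
  have htail : HasSum (fun j => b * |u j|) (b * ‖u‖) := by
    simpa using (lp.hasSum_norm (p := 1) one_pos u).mul_left b
  refine hcoord.norm_le_of_bounded (hhead.add htail) fun j => ?_
  rw [norm_mul, Real.norm_eq_abs]
  split_ifs with hj
  · have hzk : |z j k| ≤ ‖z j‖ := by
      simpa using lp.norm_apply_le_norm one_ne_zero (z j) k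
    exact le_add_of_le_of_nonneg (mul_le_mul_of_nonneg_left hzk (abs_nonneg _)) (by positivity)
  · have hzk : |z j k| ≤ b := (abs_apply_le_supNormOn hk).trans (hN j (not_lt.1 hj))
    rw [zero_add, mul_comm b]
    exact mul_le_mul_of_nonneg_left hzk (abs_nonneg _)

theorem stmt_13 (T : lp (fun _ : ℕ => ℝ) 1 →L[ℝ] lp (fun _ : ℕ => ℝ) 1)
    (x : ℕ → lp (fun _ : ℕ => ℝ) 1) (hx : IsBddSeq x)
    (hp : ∀ j : ℕ, Filter.Tendsto (fun n => x n j) Filter.atTop (nhds 0))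
    (A : Set ℕ)
    (hz : Filter.Tendsto (fun n => supNormOn A (T (lp.single 1 n 1)))
      Filter.atTop (nhds 0)) :
    Filter.Tendsto (fun n => supNormOn A (T (x n))) Filter.atTop (nhds 0) := by
  obtain ⟨C, hC⟩ := hx
  refine tendsto_order.2 ⟨fun a ha => .of_forall fun n => ha.trans_le supNormOn_nonneg,
    fun ε hε => ?_⟩
  obtain ⟨b, hb, hbC⟩ := exists_pos_mul_lt (half_pos hε) C
  obtain ⟨N, hN⟩ := eventually_atTop.1 (hz.eventually (Iic_mem_nhds hb))
  have hhead : Tendsto (fun n => ∑ j ∈ Finset.range N, |x n j| * ‖T (lp.single 1 j 1)‖)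
      atTop (nhds 0) := by
    simpa using tendsto_finsetSum (Finset.range N) fun j _ => (hp j).abs.mul_const _
  filter_upwards [hhead.eventually (Iio_mem_nhds (half_pos hε))] with n hn
  calc supNormOn A (T (x n))
      ≤ ∑ j ∈ Finset.range N, |x n j| * ‖T (lp.single 1 j 1)‖ + b * ‖x n‖ :=
        supNormOn_map_le T A (x n) N hb.le hN
    _ ≤ ∑ j ∈ Finset.range N, |x n j| * ‖T (lp.single 1 j 1)‖ + C * b := by
        nlinarith [hC n]
    _ < ε := by linarith [show _ < ε / 2 from hn]
end

section
/- Let T : ℓ¹ → ℓ¹ be a continuous linear operator such that the sequence z = (T(e_n)) converges to zero pointwise on ℕ (i.e., (T e_n)(k) → 0 as n → ∞ for each k), where (e_n) is the standard unit vector basis of ℓ¹. Then for every bounded sequence x = (x_n) in ℓ¹ converging to zero pointwise on ℕ, the sequence (T(x_n)) is bounded and converges to zero pointwise on ℕ. -/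
open Filter Set

/-!
The `k`-th coordinate of `T f` is `∑ⱼ f j * (T eⱼ) k`, a pairing of `f ∈ ℓ¹` with the
null sequence `a j = (T eⱼ) k`. Given `δ > 0`, choose `N` with `|a j| ≤ δ` for `j ≥ N`:
the terms `j < N` tend to `0` because `xₙ → 0` coordinatewise, and the tail is at most
`δ * sup ‖xₙ‖`.
-/

open Topology Finset

local notation "ℓ¹" => lp (fun _ : ℕ => ℝ) 1

namespace lp

theorem hasSum_norm_one (f : ℓ¹) : HasSum (fun j => ‖f j‖) ‖f‖ := by
  simpa using lp.hasSum_norm (p := 1) (by norm_num) f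

theorem hasSum_mul_apply_single (φ : ℓ¹ →L[ℝ] ℝ) (f : ℓ¹) :
    HasSum (fun j => f j * φ (lp.single 1 j 1)) (φ f) := by
  have h := φ.hasSum (lp.hasSum_single ENNReal.one_ne_top f)
  convert h using 2 with j
  rw [← smul_eq_mul, ← map_smul, ← lp.single_smul, smul_eq_mul, mul_one]

theorem norm_tsum_mul_le (f : ℓ¹) {a : ℕ → ℝ} {δ : ℝ} (N : ℕ)
    (ha : ∀ j, N ≤ j → ‖a j‖ ≤ δ) :
    ‖∑' j, f j * a j‖ ≤ ∑ j ∈ range N, ‖f j * a j‖ + δ * ‖f‖ := by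
  have hf := (hasSum_norm_one f).summable
  have htail : ∀ j, ‖f (j + N) * a (j + N)‖ ≤ δ * ‖f (j + N)‖ := fun j => by
    rw [norm_mul, mul_comm]
    exact mul_le_mul_of_nonneg_right (ha _ (by omega)) (norm_nonneg _)
  have hsum : Summable fun j => ‖f (j + N) * a (j + N)‖ :=
    ((summable_nat_add_iff N).2 hf |>.mul_left δ).of_nonneg_of_le (fun _ => norm_nonneg _) htail
  have hδ : 0 ≤ δ := (norm_nonneg _).trans (ha N le_rfl)
  rw [← ((summable_nat_add_iff N).1 hsum.of_norm).sum_add_tsum_nat_add N]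
  refine (norm_add_le _ _).trans (add_le_add (norm_sum_le _ _) ?_)
  calc ‖∑' j, f (j + N) * a (j + N)‖ ≤ ∑' j, ‖f (j + N) * a (j + N)‖ :=
        norm_tsum_le_tsum_norm hsum
    _ ≤ ∑' j, δ * ‖f (j + N)‖ :=
      hsum.tsum_le_tsum htail (((summable_nat_add_iff N).2 hf).mul_left δ)
    _ ≤ δ * ‖f‖ := by
      rw [tsum_mul_left, ← (hasSum_norm_one f).tsum_eq]
      exact mul_le_mul_of_nonneg_left
        (tsum_comp_le_tsum_of_inj hf (fun _ => norm_nonneg _) (add_left_injective N)) hδ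

end lp

theorem tendsto_tsum_mul_nhds_zero {x : ℕ → ℓ¹} {C : ℝ} (hC : ∀ n, ‖x n‖ ≤ C)
    (hx : ∀ j, Tendsto (fun n => x n j) atTop (𝓝 0)) {a : ℕ → ℝ}
    (ha : Tendsto a atTop (𝓝 0)) :
    Tendsto (fun n => ∑' j, x n j * a j) atTop (𝓝 0) := by
  rw [NormedAddGroup.tendsto_nhds_zero]
  intro ε hε
  obtain ⟨δ, hδ, hCδ⟩ := exists_pos_mul_lt (half_pos hε) C
  obtain ⟨N, hN⟩ := eventually_atTop.1 (NormedAddGroup.tendsto_nhds_zero.1 ha δ hδ)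
  have hhead : Tendsto (fun n => ∑ j ∈ range N, ‖x n j * a j‖) atTop (𝓝 0) := by
    simpa using tendsto_finsetSum (range N) fun j _ => ((hx j).mul_const (a j)).norm
  filter_upwards [hhead.eventually (gt_mem_nhds (half_pos hε))] with n hn
  calc ‖∑' j, x n j * a j‖ ≤ ∑ j ∈ range N, ‖x n j * a j‖ + δ * ‖x n‖ :=
        lp.norm_tsum_mul_le (x n) N fun j hj => (hN j hj).le
    _ ≤ ∑ j ∈ range N, ‖x n j * a j‖ + C * δ := by rw [mul_comm C]; gcongr; exact hC n
    _ < ε := by linarith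

theorem tendsto_apply_nhds_zero_of_tendsto_apply_single (φ : ℓ¹ →L[ℝ] ℝ)
    (hφ : Tendsto (fun j => φ (lp.single 1 j 1)) atTop (𝓝 0)) {x : ℕ → ℓ¹}
    (hbd : IsBddSeq x)
    (hx : ∀ j, Tendsto (fun n => x n j) atTop (𝓝 0)) :
    Tendsto (fun n => φ (x n)) atTop (𝓝 0) := by
  obtain ⟨C, hC⟩ := hbd
  simpa only [fun n => (lp.hasSum_mul_apply_single φ (x n)).tsum_eq] using
    tendsto_tsum_mul_nhds_zero hC hx hφ

theorem IsBddSeq.map {x : ℕ → ℓ¹} (hx : IsBddSeq x) (T : ℓ¹ →L[ℝ] ℓ¹) :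
    IsBddSeq fun n => T (x n) := by
  obtain ⟨C, hC⟩ := hx
  exact ⟨‖T‖ * C, fun n => T.le_of_opNorm_le_of_le le_rfl (hC n)⟩

theorem stmt_16 (T : lp (fun _ : ℕ => ℝ) 1 →L[ℝ] lp (fun _ : ℕ => ℝ) 1)
    (hz : ∀ k : ℕ, Filter.Tendsto (fun n => T (lp.single 1 n 1) k)
      Filter.atTop (nhds 0)) :
    ∀ x : ℕ → lp (fun _ : ℕ => ℝ) 1, IsBddSeq x →
      (∀ j : ℕ, Filter.Tendsto (fun n => x n j) Filter.atTop (nhds 0)) →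
      IsBddSeq (fun n => T (x n)) ∧
      ∀ k : ℕ, Filter.Tendsto (fun n => T (x n) k) Filter.atTop (nhds 0) := by
  intro x hbd hx
  exact ⟨hbd.map T, fun k =>
    tendsto_apply_nhds_zero_of_tendsto_apply_single ((lp.evalCLM ℝ _ 1 k).comp T) (hz k) hbd hx⟩
end

section
/- Let T : ℓ¹ → ℓ¹ be a continuous linear operator such that the sequence z = (T(e_n)) is nonatomic, where (e_n) is the standard unit vector basis of ℓ¹. Then for every bounded sequence x = (x_n) in ℓ¹ converging to zero pointwise on ℕ (in particular, for every bounded nonatomic sequence x), the sequence (T(x_n)) is nonatomic. -/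
open Filter Set

/-!
Writing `R_A : ℓ¹(ℕ) → ℓ¹(A)` for the restriction, `dsub x A = limsup ‖R_A x_n‖`, so it suffices
to show `limsup_n ‖S x_n‖ ≤ C · limsup_k ‖S e_k‖` for every bounded operator `S` on `ℓ¹`
(applied to `S = R_A ∘ T`), whenever `‖x_n‖ ≤ C` and `x_n → 0` pointwise. Expanding
`x_n = ∑ₖ x_n(k) e_k`: if `‖S e_k‖ ≤ δ` for `k ≥ K`, then
`‖S x_n‖ ≤ ∑_{k<K} |x_n(k)| ‖S e_k‖ + δ C`, and the finite head tends to `0` as `n → ∞`.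
-/

open Topology
open scoped lp

namespace lp

variable {α : Type*}

lemma hasSum_abs_one (f : ℓ¹(α, ℝ)) : HasSum (fun i => |f i|) ‖f‖ := by
  simpa using lp.hasSum_norm (p := 1) (by simp) f

lemma memℓp_restrict (f : ℓ¹(α, ℝ)) (A : Set α) : Memℓp (fun i : A => f i) 1 :=
  memℓp_gen <| by simp; exact (hasSum_abs_one f).summable.subtype A

noncomputable def restrictCLM (A : Set α) : ℓ¹(α, ℝ) →L[ℝ] ℓ¹(A, ℝ) :=
  LinearMap.mkContinuous
    { toFun f := ⟨fun i : A => f i, memℓp_restrict f A⟩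
      map_add' f g := by ext; rfl
      map_smul' c f := by ext; rfl }
    1 fun f => by
      rw [one_mul, ← (hasSum_abs_one f).tsum_eq, ← (hasSum_abs_one _).tsum_eq]
      exact (hasSum_abs_one f).summable.tsum_subtype_le _ A fun _ => abs_nonneg _

lemma norm_restrictCLM (A : Set α) (f : ℓ¹(α, ℝ)) :
    ‖restrictCLM A f‖ = ∑' i : A, |f i| :=
  (hasSum_abs_one _).tsum_eq.symm

end lp

lemma dsub_eq_limsup_norm_restrictCLM (x : ℕ → ℓ¹(ℕ, ℝ)) (A : Set ℕ) :
    dsub x A = limsup (fun n => ‖lp.restrictCLM A (x n)‖) atTop := by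
  simp only [dsub, lp.norm_restrictCLM]

namespace ContinuousLinearMap

variable {α E : Type*} [NormedAddCommGroup E] [NormedSpace ℝ E]

section

variable [DecidableEq α]

lemma hasSum_lp_one (S : ℓ¹(α, ℝ) →L[ℝ] E) (x : ℓ¹(α, ℝ)) :
    HasSum (fun i => x i • S (lp.single 1 i 1)) (S x) := by
  have hsingle (i : α) : lp.single 1 i (x i) = x i • (lp.single 1 i 1 : ℓ¹(α, ℝ)) := by
    simpa using lp.single_smul (E := fun _ : α => ℝ) (𝕜 := ℝ) 1 i (x i) 1
  simpa [hsingle] using S.hasSum (lp.hasSum_single ENNReal.one_ne_top x)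

lemma norm_apply_le_sum_add (S : ℓ¹(α, ℝ) →L[ℝ] E) (x : ℓ¹(α, ℝ)) (s : Finset α) {δ : ℝ}
    (hδ0 : 0 ≤ δ) (hδ : ∀ i ∉ s, ‖S (lp.single 1 i 1)‖ ≤ δ) :
    ‖S x‖ ≤ ∑ i ∈ s, |x i| * ‖S (lp.single 1 i 1)‖ + δ * ‖x‖ := by
  have hhead : HasSum (fun i => if i ∈ s then |x i| * ‖S (lp.single 1 i 1)‖ else 0)
      (∑ i ∈ s, |x i| * ‖S (lp.single 1 i 1)‖) := by
    simpa using hasSum_sum_of_ne_finset_zero (s := s)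
      (f := fun i => if i ∈ s then |x i| * ‖S (lp.single 1 i 1)‖ else 0) (by simp_all)
  refine (S.hasSum_lp_one x).norm_le_of_bounded (hhead.add ((lp.hasSum_abs_one x).mul_left δ))
    fun i => ?_
  rw [norm_smul, Real.norm_eq_abs]
  split_ifs with hi
  · nlinarith [abs_nonneg (x i)]
  · nlinarith [abs_nonneg (x i), hδ i hi]

end

lemma limsup_norm_apply_le (S : ℓ¹(ℕ, ℝ) →L[ℝ] E) {x : ℕ → ℓ¹(ℕ, ℝ)} {C : ℝ}
    (hC : ∀ n, ‖x n‖ ≤ C) (hx : ∀ j, Tendsto (fun n => x n j) atTop (𝓝 0)) :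
    limsup (fun n => ‖S (x n)‖) atTop ≤ C * limsup (fun k => ‖S (lp.single 1 k 1)‖) atTop := by
  set L := limsup (fun k => ‖S (lp.single 1 k 1)‖) atTop
  have hsingle (k : ℕ) : ‖S (lp.single 1 k 1)‖ ≤ ‖S‖ :=
    S.unit_le_opNorm _ (by simp [lp.norm_single])
  have hδ_lt : ∀ δ > L, limsup (fun n => ‖S (x n)‖) atTop ≤ C * δ := by
    intro δ hδ
    obtain ⟨K, hK⟩ := eventually_atTop.1 <|
      eventually_lt_of_limsup_lt hδ (isBoundedUnder_of ⟨‖S‖, hsingle⟩)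
    have hδ0 : 0 ≤ δ := (norm_nonneg _).trans (hK K le_rfl).le
    have hbound (n : ℕ) :
        ‖S (x n)‖ ≤ ∑ k ∈ Finset.range K, |x n k| * ‖S (lp.single 1 k 1)‖ + C * δ := by
      refine (S.norm_apply_le_sum_add (x n) (Finset.range K) hδ0 fun k hk => (hK k ?_).le).trans ?_
      · simpa using hk
      · rw [mul_comm C]; gcongr; exact hC n
    have hhead : Tendsto
        (fun n => ∑ k ∈ Finset.range K, |x n k| * ‖S (lp.single 1 k 1)‖ + C * δ) atTop
        (𝓝 (C * δ)) := by
      simpa using (tendsto_finsetSum _ fun k _ => (hx k).abs.mul_const _).add_const (C * δ)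
    calc limsup (fun n => ‖S (x n)‖) atTop
        ≤ limsup (fun n => ∑ k ∈ Finset.range K, |x n k| * ‖S (lp.single 1 k 1)‖ + C * δ) atTop :=
          limsup_le_limsup (.of_forall hbound)
            (isCoboundedUnder_le_of_le atTop fun n => norm_nonneg _) hhead.isBoundedUnder_le
      _ = C * δ := hhead.limsup_eq
  exact ge_of_tendsto ((continuous_const_mul C).tendsto L |>.mono_left nhdsWithin_le_nhds)
    (eventually_nhdsWithin_of_forall (s := Ioi L) hδ_lt)

end ContinuousLinearMap

theorem stmt_18 (T : lp (fun _ : ℕ => ℝ) 1 →L[ℝ] lp (fun _ : ℕ => ℝ) 1)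
    (hz : Nonatomic (fun n => T (lp.single 1 n 1))) :
    ∀ x : ℕ → lp (fun _ : ℕ => ℝ) 1, IsBddSeq x →
      (∀ j : ℕ, Filter.Tendsto (fun n => x n j) Filter.atTop (nhds 0)) →
      Nonatomic (fun n => T (x n)) := by
  rintro x ⟨C, hC⟩ hx ε hε
  have hC0 : 0 ≤ C := (norm_nonneg _).trans (hC 0)
  obtain ⟨m, A, hcover, hdisj, hsmall⟩ := hz (ε / (C + 1)) (by positivity)
  refine ⟨m, A, hcover, hdisj, fun i => ?_⟩
  set S := lp.restrictCLM (A i) ∘L T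
  calc dsub (fun n => T (x n)) (A i)
      = limsup (fun n => ‖S (x n)‖) atTop := dsub_eq_limsup_norm_restrictCLM _ _
    _ ≤ C * limsup (fun k => ‖S (lp.single 1 k 1)‖) atTop := S.limsup_norm_apply_le hC hx
    _ = C * dsub (fun k => T (lp.single 1 k 1)) (A i) := by
      rw [dsub_eq_limsup_norm_restrictCLM]; rfl
    _ ≤ C * (ε / (C + 1)) := by gcongr; exact hsmall i
    _ ≤ ε := by
      rw [mul_div_assoc', div_le_iff₀ (by positivity)]
      nlinarith
end
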